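/- The L-structure F²_ℚ, whose universe is the set of all lines in the Euclidean plane that contain at least two distinct points with rational coordinates, with the binary relation O interpreted as perpendicularity of lines, is a model of the theory SAPP. -/

import Mathlib

open FirstOrder Language Structure BoundedFormula

/-- The relation symbols of the language `L`: a single binary relation `O`. -/
inductive PerpRel : ℕ → Type
  | o : PerpRel 2

/-- The first-order language with a single binary relation symbol `O`. -/
def L : Language := ⟨fun _ => Empty, PerpRel⟩
  deriving IsRelational

/-- The binary relation symbol `O` of `L`. -/
abbrev oSym : L.Relations 2 := .o

/-- `O(xᵢ, xⱼ)` as a bounded formula. -/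
def oBF {n : ℕ} (i j : Fin n) : L.BoundedFormula Empty n :=
  oSym.boundedFormula₂ (&i) (&j)

/-- Finite conjunction of a list of bounded formulas. -/
def andAll {n : ℕ} : List (L.BoundedFormula Empty n) → L.BoundedFormula Empty n
  | [] => ⊤
  | φ :: l => φ ⊓ andAll l

/-- λ₁ₙ : ∀y₁…∀yₙ∀s(O(s,y₁) ∧ … ∧ O(s,yₙ) → ∃t(t ≠ y₁ ∧ … ∧ t ≠ yₙ ∧ O(s,t))).
Variables: y₁,…,yₙ are de Bruijn indices 0,…,n-1, s is index n, t is index n+1. -/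
def lam1 (n : ℕ) : L.Sentence :=
  ((andAll ((List.finRange n).map fun i => oBF (Fin.last n) i.castSucc)).imp
    ((andAll ((List.finRange n).map fun i =>
        ∼((&(Fin.last (n + 1))) =' (&(i.castSucc.castSucc)))) ⊓
      oBF ((Fin.last n).castSucc) (Fin.last (n + 1))).ex)).alls

/-- λ₂ₙ : ∀y₁…∀yₙ∃s(¬O(s,y₁) ∧ … ∧ ¬O(s,yₙ)).
Variables: y₁,…,yₙ are de Bruijn indices 0,…,n-1, s is index n. -/
def lam2 (n : ℕ) : L.Sentence :=
  ((andAll ((List.finRange n).map fun i => ∼(oBF (Fin.last n) i.castSucc))).ex).alls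

/-- λ₃ : ∀x ¬O(x,x). -/
def lam3 : L.Sentence := (∼(oBF (0 : Fin 1) 0)).alls

/-- λ₄ : ∀x∀y(O(x,y) → O(y,x)). -/
def lam4 : L.Sentence := ((oBF (0 : Fin 2) 1).imp (oBF (1 : Fin 2) 0)).alls

/-- λ₅ : ∀x∃y O(x,y). -/
def lam5 : L.Sentence := ((oBF (0 : Fin 2) 1).ex).alls

/-- λ₆ : ∀x∀y∀z∀t(O(x,z) ∧ O(y,z) ∧ O(x,t) → O(y,t)). -/
def lam6 : L.Sentence :=
  ((oBF (0 : Fin 4) 2 ⊓ oBF (1 : Fin 4) 2 ⊓ oBF (0 : Fin 4) 3).imp (oBF (1 : Fin 4) 3)).alls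

/-- The theory SAPP. -/
def SAPP : L.Theory :=
  {φ | ∃ n, 1 ≤ n ∧ φ = lam1 n} ∪ {φ | ∃ n, 2 ≤ n ∧ φ = lam2 n} ∪ {lam3, lam4, lam5, lam6}

/-- The Euclidean plane ℝ². -/
abbrev Plane := EuclideanSpace ℝ (Fin 2)

/-- A line in the Euclidean plane: a one-dimensional affine subspace of ℝ². -/
structure Line where
  carrier : AffineSubspace ℝ Plane
  one_dim : Module.finrank ℝ carrier.direction = 1

/-- Two lines are perpendicular iff their direction subspaces are orthogonal. -/
def Line.Perp (a b : Line) : Prop :=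
  a.carrier.direction ⟂ b.carrier.direction

/-- A point of the plane has rational coordinates. -/
def HasRatCoords (p : Plane) : Prop := ∀ i, ∃ q : ℚ, p i = (q : ℝ)

/-- The universe of F²_ℚ: lines containing at least two distinct points with rational
coordinates. -/
def QLine : Type :=
  {a : Line // ∃ p q : Plane, p ≠ q ∧ p ∈ a.carrier ∧ q ∈ a.carrier ∧
    HasRatCoords p ∧ HasRatCoords q}

/-- The structure F²_ℚ, with O interpreted as perpendicularity. -/
instance : L.Structure QLine where
  RelMap | .o => fun x => Line.Perp (x 0).val (x 1).val

/-!
Perpendicularity of lines only depends on their directions, and in the plane `a ⟂ b` holds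
exactly when the direction of `a` is the orthogonal complement of that of `b`; this gives
λ₃, λ₄ and λ₆. Turning a rational direction `d` by a right angle keeps it rational, so the
parallels to `rot90 d` through the points `k • d`, `k ∈ ℕ`, are infinitely many rational lines
perpendicular to a given one: this gives λ₁ and λ₅. Finally the slopes `k ∈ ℕ` give infinitely
many rational directions, while the lines perpendicular to one of `y₁, …, yₙ` have only `n`
directions, which gives λ₂.
-/

lemma Fin.forall_snoc_pi {α : Type*} {n : ℕ} {P : (Fin (n + 1) → α) → Prop} :
    (∀ xs, P xs) ↔ ∀ (ys : Fin n → α) (s : α), P (Fin.snoc ys s) := by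
  rw [← (Fin.snocEquiv fun _ => α).forall_congr_right]
  simp only [Fin.snocEquiv, Equiv.coe_fn_mk, Prod.forall]
  exact forall_comm

section Semantics

variable {M : Type*} [L.Structure M]

def oRel (x y : M) : Prop := RelMap oSym ![x, y]

@[simp] lemma realize_oBF {n : ℕ} (i j : Fin n) (v : Empty → M) (xs : Fin n → M) :
    (oBF i j).Realize v xs ↔ oRel (xs i) (xs j) := by
  simp only [oBF, realize_rel₂]; rfl

@[simp] lemma realize_andAll {n : ℕ} (l : List (L.BoundedFormula Empty n)) (v : Empty → M)
    (xs : Fin n → M) : (andAll l).Realize v xs ↔ ∀ φ ∈ l, φ.Realize v xs := by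
  induction l with
  | nil => simp [andAll]
  | cons φ l ih => simp [andAll, ih]

lemma realize_lam1 {n : ℕ} : M ⊨ lam1 n ↔
    ∀ (ys : Fin n → M) (s : M), (∀ i, oRel s (ys i)) → ∃ t, (∀ i, t ≠ ys i) ∧ oRel s t := by
  simp [Sentence.Realize, BoundedFormula.realize_alls, lam1, Fin.forall_snoc_pi]

lemma realize_lam2 {n : ℕ} : M ⊨ lam2 n ↔ ∀ ys : Fin n → M, ∃ s, ∀ i, ¬oRel s (ys i) := by
  simp [Sentence.Realize, BoundedFormula.realize_alls, lam2]

lemma realize_lam3 : M ⊨ lam3 ↔ ∀ x : M, ¬oRel x x := by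
  simp [Sentence.Realize, BoundedFormula.realize_alls, lam3, Fin.forall_fin_succ_pi]

lemma realize_lam4 : M ⊨ lam4 ↔ ∀ x y : M, oRel x y → oRel y x := by
  simp [Sentence.Realize, BoundedFormula.realize_alls, lam4, Fin.forall_fin_succ_pi]

lemma realize_lam5 : M ⊨ lam5 ↔ ∀ x : M, ∃ y, oRel x y := by
  simp [Sentence.Realize, BoundedFormula.realize_alls, lam5, Fin.forall_fin_succ_pi]
  exact Iff.rfl

lemma realize_lam6 : M ⊨ lam6 ↔
    ∀ x y z t : M, oRel x z → oRel y z → oRel x t → oRel y t := by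
  simp [Sentence.Realize, BoundedFormula.realize_alls, lam6, Fin.forall_fin_succ_pi]
  exact Iff.rfl

end Semantics

open Module Submodule RealInnerProductSpace

lemma Submodule.eq_orthogonal_of_isOrtho {𝕜 E : Type*} [RCLike 𝕜] [NormedAddCommGroup E]
    [InnerProductSpace 𝕜 E] [FiniteDimensional 𝕜 E] {U W : Submodule 𝕜 E} (h : U ⟂ W)
    (hdim : finrank 𝕜 E ≤ finrank 𝕜 U + finrank 𝕜 W) : U = Wᗮ := by
  refine eq_of_le_of_finrank_le (isOrtho_iff_le.mp h) ?_
  have := W.finrank_add_finrank_orthogonal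
  omega

namespace Line

lemma Perp.symm {a b : Line} (h : a.Perp b) : b.Perp a := IsOrtho.symm h

lemma not_perp_self (a : Line) : ¬a.Perp a := by
  intro h
  have := a.one_dim
  rw [isOrtho_self.mp h, finrank_bot] at this
  exact zero_ne_one this

lemma perp_iff_direction_eq_orthogonal {a b : Line} :
    a.Perp b ↔ a.carrier.direction = b.carrier.directionᗮ := by
  refine ⟨fun h => eq_orthogonal_of_isOrtho h ?_, fun h => (h ▸ isOrtho_orthogonal_left _ :)⟩
  rw [a.one_dim, b.one_dim, finrank_euclideanSpace_fin]

lemma Perp.perp_of_perp {a b c d : Line} (hac : a.Perp c) (hbc : b.Perp c) (had : a.Perp d) :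
    b.Perp d := by
  have hba : b.carrier.direction = a.carrier.direction := by
    rw [perp_iff_direction_eq_orthogonal.mp hac, perp_iff_direction_eq_orthogonal.mp hbc]
  show b.carrier.direction ⟂ _
  rwa [hba]

end Line

def ratPoints : AddSubgroup Plane where
  carrier := {p | HasRatCoords p}
  zero_mem' i := ⟨0, by simp⟩
  add_mem' {p q} hp hq i := by
    obtain ⟨a, ha⟩ := hp i
    obtain ⟨b, hb⟩ := hq i
    exact ⟨a + b, by simp [ha, hb]⟩
  neg_mem' {p} hp i := by
    obtain ⟨a, ha⟩ := hp i
    exact ⟨-a, by simp [ha]⟩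

lemma ratPoint_mem_ratPoints (x y : ℚ) : !₂[(x : ℝ), y] ∈ ratPoints := by
  intro i
  fin_cases i
  exacts [⟨x, rfl⟩, ⟨y, rfl⟩]

def rot90 (v : Plane) : Plane := !₂[-v 1, v 0]

lemma rot90_mem_ratPoints {v : Plane} (hv : v ∈ ratPoints) : rot90 v ∈ ratPoints := by
  obtain ⟨a, ha⟩ := hv 0
  obtain ⟨b, hb⟩ := hv 1
  simpa [rot90, ha, hb] using ratPoint_mem_ratPoints (-b) a

lemma rot90_ne_zero {v : Plane} (hv : v ≠ 0) : rot90 v ≠ 0 := by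
  contrapose! hv
  ext i
  fin_cases i
  · simpa [rot90] using congrArg (· 1) hv
  · simpa [rot90] using congrArg (· 0) hv

lemma inner_rot90_self (v : Plane) : ⟪rot90 v, v⟫ = 0 := by
  simp [rot90, PiLp.inner_apply, Fin.sum_univ_two]
  ring

namespace QLine

noncomputable def through (p d : Plane) (hp : p ∈ ratPoints) (hd : d ∈ ratPoints)
    (hd0 : d ≠ 0) : QLine :=
  ⟨⟨AffineSubspace.mk' p (ℝ ∙ d),
      by rw [AffineSubspace.direction_mk', finrank_span_singleton hd0]⟩,
    p, p + d, by simpa using hd0, AffineSubspace.self_mem_mk' _ _,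
    AffineSubspace.mem_mk'.2 (by simp [mem_span_singleton_self]), hp, add_mem hp hd⟩

lemma direction_through (p d : Plane) (hp : p ∈ ratPoints) (hd : d ∈ ratPoints) (hd0 : d ≠ 0) :
    (through p d hp hd hd0).val.carrier.direction = ℝ ∙ d :=
  AffineSubspace.direction_mk' _ _

lemma exists_rat_direction (a : QLine) :
    ∃ d ∈ ratPoints, d ≠ 0 ∧ a.val.carrier.direction = ℝ ∙ d := by
  obtain ⟨p, q, hpq, hp, hq, hrp, hrq⟩ := a.prop
  have hd0 : q - p ≠ 0 := sub_ne_zero.mpr hpq.symm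
  refine ⟨q - p, sub_mem hrq hrp, hd0, (eq_of_le_of_finrank_le ?_ ?_).symm⟩
  · exact (span_singleton_le_iff_mem _ _).2 (AffineSubspace.vsub_mem_direction hq hp)
  · rw [finrank_span_singleton hd0, a.val.one_dim]

lemma inner_eq_of_mem_through {p d x : Plane} {hp : p ∈ ratPoints} {hd : rot90 d ∈ ratPoints}
    {hd0 : rot90 d ≠ 0} (hx : x ∈ (through p (rot90 d) hp hd hd0).val.carrier) :
    ⟪x, d⟫ = ⟪p, d⟫ := by
  obtain ⟨t, ht⟩ := mem_span_singleton.mp (AffineSubspace.mem_mk'.mp hx)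
  rw [← sub_eq_zero, ← inner_sub_left, ← vsub_eq_sub, ← ht, real_inner_smul_left,
    inner_rot90_self, mul_zero]

lemma infinite_setOf_perp (s : QLine) : {t : QLine | s.val.Perp t.val}.Infinite := by
  obtain ⟨d, hd, hd0, hs⟩ := s.exists_rat_direction
  let f (k : ℕ) : QLine := through (k • d) (rot90 d) (nsmul_mem hd k) (rot90_mem_ratPoints hd)
    (rot90_ne_zero hd0)
  refine Set.infinite_of_injective_forall_mem (f := f) (fun k l hkl => ?_) (fun k => ?_)
  · have hkl : (k • d : Plane) ∈ (f l).val.carrier := by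
      rw [← hkl]; exact AffineSubspace.self_mem_mk' _ _
    have hk := inner_eq_of_mem_through hkl
    simp only [← Nat.cast_smul_eq_nsmul ℝ, real_inner_smul_left] at hk
    exact_mod_cast mul_right_cancel₀ (inner_self_ne_zero.mpr hd0) hk
  · show s.val.carrier.direction ⟂ (f k).val.carrier.direction
    rw [hs, direction_through, isOrtho_span]
    simp only [Set.mem_singleton_iff, forall_eq]
    rw [real_inner_comm, inner_rot90_self]

lemma infinite_range_direction :
    (Set.range fun a : QLine => a.val.carrier.direction).Infinite := by
  let v (k : ℕ) : Plane := !₂[((1 : ℚ) : ℝ), ((k : ℚ) : ℝ)]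
  refine Set.infinite_of_injective_forall_mem (f := fun k => ℝ ∙ v k) (fun k l hkl => ?_)
    (fun k => ⟨through 0 (v k) (zero_mem _) (ratPoint_mem_ratPoints 1 k) ?_, ?_⟩)
  · obtain ⟨z, hz⟩ := (span_singleton_eq_span_singleton).mp hkl
    have h0 := congrArg (· 0) hz
    have h1 := congrArg (· 1) hz
    simp [v, Units.smul_def] at h0 h1
    rw [h0, Units.val_one, one_mul] at h1
    exact_mod_cast h1
  · simp [v]
  · exact direction_through _ _ _ _ _

end QLine

/-- F²_ℚ is a model of SAPP. -/
theorem statement_1 : QLine ⊨ SAPP := by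
  simp only [Theory.model_iff, SAPP, Set.mem_union, Set.mem_ofPred_eq, Set.mem_insert_iff,
    Set.mem_singleton_iff]
  rintro φ ((⟨n, -, rfl⟩ | ⟨n, -, rfl⟩) | rfl | rfl | rfl | rfl)
  · refine realize_lam1.2 fun ys s _ => ?_
    obtain ⟨t, hst, ht⟩ := ((QLine.infinite_setOf_perp s).sdiff (Set.finite_range ys)).nonempty
    exact ⟨t, fun i hi => ht ⟨i, hi.symm⟩, hst⟩
  · refine realize_lam2.2 fun ys => ?_
    obtain ⟨-, ⟨s, rfl⟩, hs⟩ := (QLine.infinite_range_direction.sdiff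
      (Set.finite_range fun i => (ys i).val.carrier.directionᗮ)).nonempty
    exact ⟨s, fun i hi => hs ⟨i, (Line.perp_iff_direction_eq_orthogonal.mp hi).symm⟩⟩
  · exact realize_lam3.2 fun x => x.val.not_perp_self
  · exact realize_lam4.2 fun x y => Line.Perp.symm
  · exact realize_lam5.2 fun x => (QLine.infinite_setOf_perp x).nonempty
  · exact realize_lam6.2 fun x y z t => Line.Perp.perp_of_perp
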